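/- Let n ∈ {1, 2, 3, 4, 6} and let a, b, c, d be integers with a·d − b·c ∈ {1, −1} and with c = n or c = −n. Then there exist integers y₁, x₂, y₂ ∈ {1, −1} and integers z₁, z₂ such that, writing Q₁ for the 2×2 integer matrix with rows (1, z₁), (0, y₁) and Q₂ for the 2×2 integer matrix with rows (x₂, z₂), (0, y₂), one has Q₂ · A · Q₁ = the matrix with rows (1, 0), (n, 1), where A is the matrix with rows (a, b), (c, d). -/

import Mathlib

/-!
Reducing mod `n`, the entry `a` is a unit of `ZMod n` because `c ≡ 0`; for the listed `n` the
only units of `ZMod n` are `±1`, so some sign `x` has `x * a ≡ 1 [ZMOD c]`, i.e. `x * a + z * c = 1`.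
Hence a left factor `!![x, z; 0, ±1]` turns the first column of `A` into `(1, n)`, and a first
column `(1, n)` together with a unit determinant is cleared by a right upper-triangular factor.
-/

open Matrix

theorem ZMod.eq_one_or_eq_neg_one_of_isUnit {n : ℕ} (hn : n ∈ ({1, 2, 3, 4, 6} : Set ℕ))
    {u : ZMod n} (hu : IsUnit u) : u = 1 ∨ u = -1 := by
  simp only [Set.mem_insert_iff, Set.mem_singleton_iff] at hn
  revert u
  rcases hn with rfl | rfl | rfl | rfl | rfl <;> decide

theorem exists_isUnit_mul_add_mul_eq_one {n : ℕ} (hn : n ∈ ({1, 2, 3, 4, 6} : Set ℕ))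
    {a b c d : ℤ} (hdet : IsUnit (a * d - b * c)) (hc : c.natAbs = n) :
    ∃ x z : ℤ, IsUnit x ∧ x * a + z * c = 1 := by
  have hc0 : (c : ZMod n) = 0 :=
    (ZMod.intCast_zmod_eq_zero_iff_dvd c n).2 (hc ▸ Int.natAbs_dvd_self)
  have ha : IsUnit (a : ZMod n) := by
    have had : IsUnit ((a : ZMod n) * d) := by
      simpa only [map_sub, map_mul, eq_intCast, hc0, mul_zero, sub_zero]
        using hdet.map (Int.castRingHom (ZMod n))
    exact isUnit_of_mul_isUnit_left had
  obtain ⟨x, hx, hxa⟩ : ∃ x : ℤ, IsUnit x ∧ ((x * a : ℤ) : ZMod n) = ((1 : ℤ) : ZMod n) := by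
    rcases ZMod.eq_one_or_eq_neg_one_of_isUnit hn ha with h | h
    · exact ⟨1, isUnit_one, by push_cast; rw [h, one_mul]⟩
    · exact ⟨-1, isUnit_one.neg, by push_cast; rw [h, neg_one_mul, neg_neg]⟩
  obtain ⟨z, hz⟩ : c ∣ 1 - x * a := by
    rw [← Int.natAbs_dvd, hc]
    exact (ZMod.intCast_eq_intCast_iff_dvd_sub _ _ n).1 hxa
  exact ⟨x, z, hx, by linear_combination -hz⟩

theorem mul_upperTriangular_eq_of_det_mul_eq_one {R : Type*} [CommRing R]
    (M : Matrix (Fin 2) (Fin 2) R) (h₀₀ : M 0 0 = 1) {y : R} (hy : M.det * y = 1) :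
    M * !![1, -(M 0 1 * y); 0, y] = !![1, 0; M 1 0, 1] := by
  rw [det_fin_two, h₀₀] at hy
  ext i j
  fin_cases i <;> fin_cases j <;>
    simp only [Fin.zero_eta, Fin.mk_one, Fin.isValue, mul_apply, of_apply, cons_val',
      cons_val_zero, cons_val_one, cons_val_fin_one, Fin.sum_univ_two, h₀₀, one_mul, mul_one,
      mul_zero, add_zero, mul_neg, neg_add_cancel]
  linear_combination hy

/-- The explicit normal-form claim from the proof of the gluing lemma:
for `n ∈ {1, 2, 3, 4, 6}` and a matrix `!![a, b; c, d]` with determinant `±1`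
and `c = ±n`, there are upper-triangular unit matrices `Q₁ = !![1, z₁; 0, y₁]`
and `Q₂ = !![x₂, z₂; 0, y₂]` with `Q₂ * A * Q₁ = !![1, 0; n, 1]`. -/
theorem exists_triangular_units_normal_form (n : ℕ)
    (hn : n ∈ ({1, 2, 3, 4, 6} : Set ℕ))
    (a b c d : ℤ)
    (hdet : a * d - b * c = 1 ∨ a * d - b * c = -1)
    (hc : c = (n : ℤ) ∨ c = -(n : ℤ)) :
    ∃ y₁ x₂ y₂ z₁ z₂ : ℤ,
      (y₁ = 1 ∨ y₁ = -1) ∧ (x₂ = 1 ∨ x₂ = -1) ∧ (y₂ = 1 ∨ y₂ = -1) ∧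
        !![x₂, z₂; 0, y₂] * !![a, b; c, d] * !![1, z₁; 0, y₁]
          = !![1, 0; (n : ℤ), 1] := by
  rw [← Int.isUnit_iff] at hdet
  obtain ⟨y₂, hy₂, hy₂c⟩ : ∃ y₂ : ℤ, IsUnit y₂ ∧ y₂ * c = n := by
    rcases hc with rfl | rfl
    · exact ⟨1, isUnit_one, one_mul _⟩
    · exact ⟨-1, isUnit_one.neg, by ring⟩
  obtain ⟨x₂, z₂, hx₂, hxz⟩ :=
    exists_isUnit_mul_add_mul_eq_one hn hdet (Int.natAbs_eq_iff.2 hc)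
  set M := !![x₂, z₂; 0, y₂] * !![a, b; c, d]
  have hM₀₀ : M 0 0 = 1 := by simpa [M, mul_apply, Fin.sum_univ_two] using hxz
  have hM₁₀ : M 1 0 = n := by simpa [M, mul_apply, Fin.sum_univ_two] using hy₂c
  have hMdet : IsUnit M.det := by
    rw [det_mul, det_fin_two_of, det_fin_two_of, mul_zero, sub_zero]
    exact (hx₂.mul hy₂).mul hdet
  refine ⟨M.det, x₂, y₂, -(M 0 1 * M.det), z₂, Int.isUnit_iff.1 hMdet,
    Int.isUnit_iff.1 hx₂, Int.isUnit_iff.1 hy₂, ?_⟩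
  rw [mul_upperTriangular_eq_of_det_mul_eq_one M hM₀₀ (Int.isUnit_mul_self hMdet), hM₁₀]
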